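/- arXiv:1004.1733 — 7 statements merged into one kernel-verified Lean document; each statement's English description precedes it below -/
import Mathlib

section
/- For Gessel's step set S = {(1,0),(-1,0),(1,1),(-1,-1)}, the generators of the group are ξ(x,y) = (x, 1/(x²y)) and η(x,y) = (1/(xy), y), and the element δ = ηξ satisfies δ⁴ = id while δ² ≠ id, so the group ⟨ξ,η⟩ has order 8. -/
/-- For Gessel's step set `S = {(1,0),(-1,0),(1,1),(-1,-1)}`, the group generators are
`ξ(x,y) = (x, 1/(x²y))` and `η(x,y) = (1/(xy), y)`, and `δ = ηξ` (acting on points as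
`ξ ∘ η`) satisfies `δ⁴ = id` while `δ² ≠ id`; hence the group `⟨ξ,η⟩` has order 8. -/
theorem stmt_5 (ξ η δ : ℂ × ℂ → ℂ × ℂ)
    (hξ : ∀ p : ℂ × ℂ, ξ p = (p.1, 1 / (p.1 ^ 2 * p.2)))
    (hη : ∀ p : ℂ × ℂ, η p = (1 / (p.1 * p.2), p.2))
    (hδ : ∀ p : ℂ × ℂ, δ p = ξ (η p)) :
    (∀ x y : ℂ, x ≠ 0 → y ≠ 0 → δ (δ (δ (δ (x, y)))) = (x, y)) ∧
      (∃ x y : ℂ, x ≠ 0 ∧ y ≠ 0 ∧ δ (δ (x, y)) ≠ (x, y)) := by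
  have key : ∀ x y : ℂ, x ≠ 0 → y ≠ 0 → δ (x, y) = (1 / (x * y), x ^ 2 * y) := by
    intro x y hx hy
    rw [hδ, hη, hξ]
    simp only [Prod.mk.injEq]
    constructor
    · trivial
    · field_simp
  have key2 : ∀ x y : ℂ, x ≠ 0 → y ≠ 0 → δ (δ (x, y)) = (1 / x, 1 / y) := by
    intro x y hx hy
    rw [key x y hx hy, key _ _ (by simp [hx, hy]) (by simp [hx, hy])]
    have hxy : x * y ≠ 0 := mul_ne_zero hx hy
    simp only [Prod.mk.injEq]
    constructor <;> field_simp <;> ring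
  constructor
  · intro x y hx hy
    rw [key2 x y hx hy, key2 _ _ (by simp [hx, hy]) (by simp [hx, hy])]
    simp
  · refine ⟨2, 1, two_ne_zero, one_ne_zero, ?_⟩
    rw [key2 2 1 two_ne_zero one_ne_zero]
    intro h
    have := congrArg Prod.fst h
    norm_num at this
end

section
/- For Gessel's walk, with ξ(x,y) = (x, 1/(x²y)), η(x,y) = (1/(xy), y), and δ = ηξ, the signed orbit sum of the monomial xy over the group H = {id, δ, δ², δ³, ξ, ξδ, ξδ², ξδ³} vanishes identically: Σ_{k=0}^{3} [ (xy)∘(η∘δᵏ) − (xy)∘δᵏ ] = 0 as a rational function of (x,y). -/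
/-- For Gessel's walk, with `ξ(x,y) = (x, 1/(x²y))`, `η(x,y) = (1/(xy), y)` and
`δ = ηξ` (acting on points as `ξ ∘ η`), the signed orbit sum of the monomial `xy`
over the group `{δᵏ, ηδᵏ : 0 ≤ k ≤ 3}` vanishes identically:
`Σ_{k=0}^{3} [ (xy)∘(ηδᵏ) − (xy)∘δᵏ ] = 0`. -/
theorem stmt_6 (ξ η δ : ℂ × ℂ → ℂ × ℂ) (m : ℂ × ℂ → ℂ)
    (hξ : ∀ p : ℂ × ℂ, ξ p = (p.1, 1 / (p.1 ^ 2 * p.2)))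
    (hη : ∀ p : ℂ × ℂ, η p = (1 / (p.1 * p.2), p.2))
    (hδ : ∀ p : ℂ × ℂ, δ p = ξ (η p))
    (hm : ∀ p : ℂ × ℂ, m p = p.1 * p.2)
    (x y : ℂ) (hx : x ≠ 0) (hy : y ≠ 0) :
    ∑ k ∈ Finset.range 4, (m (δ^[k] (η (x, y))) - m (δ^[k] (x, y))) = 0 := by
  have hδ' : ∀ a b : ℂ, a ≠ 0 → b ≠ 0 → δ (a, b) = (1 / (a * b), a ^ 2 * b) := by
    intro a b ha hb
    rw [hδ, hη, hξ]
    simp only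
    congr 1
    field_simp
  have hη0 : η (x, y) = (1 / (x * y), y) := by rw [hη]
  have hd1 : δ (x, y) = (1 / (x * y), x ^ 2 * y) := hδ' x y hx hy
  have hxy : x * y ≠ 0 := mul_ne_zero hx hy
  have hinv : (1 : ℂ) / (x * y) ≠ 0 := one_div_ne_zero hxy
  have hx2y : x ^ 2 * y ≠ 0 := mul_ne_zero (pow_ne_zero 2 hx) hy
  have hd2 : δ (1 / (x * y), x ^ 2 * y) = (1 / x, 1 / y) := by
    rw [hδ' _ _ hinv hx2y]
    congr 1 <;> field_simp <;> ring
  have hd3 : δ (1 / x, 1 / y) = (x * y, 1 / (x ^ 2 * y)) := by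
    rw [hδ' _ _ (one_div_ne_zero hx) (one_div_ne_zero hy)]
    congr 1 <;> field_simp <;> ring
  have he1 : δ (1 / (x * y), y) = (x, 1 / (x ^ 2 * y)) := by
    rw [hδ' _ _ hinv hy]
    congr 1 <;> field_simp <;> ring
  have hix2y : (1 : ℂ) / (x ^ 2 * y) ≠ 0 := one_div_ne_zero hx2y
  have he2 : δ (x, 1 / (x ^ 2 * y)) = (x * y, 1 / y) := by
    rw [hδ' _ _ hx hix2y]
    congr 1 <;> field_simp <;> ring
  have he3 : δ (x * y, 1 / y) = (1 / x, x ^ 2 * y) := by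
    rw [hδ' _ _ hxy (one_div_ne_zero hy)]
    congr 1 <;> field_simp <;> ring
  simp only [Finset.sum_range_succ, Finset.sum_range_zero,
    Function.iterate_succ_apply, Function.iterate_zero_apply,
    hη0, hd1, hd2, hd3, he1, he2, he3, hm]
  field_simp
  ring
end

section
/- For the step set S = {(0,1),(0,-1),(1,1),(-1,-1)} (the middle walk of order 6 with c = 1 in the functional equation), with ξ and η the associated group generators and δ = ηξ, the signed orbit sum Σ_{k=0}^{2} [ (xy)∘(η∘δᵏ) − (xy)∘δᵏ ] vanishes identically as a rational function of (x,y). -/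
/-!
For this step set both generators are monomial maps off a thin exceptional set:
`ξ (a, b) = (a, 1/(ab))` and `η (a, b) = (1/(ab²), b)`, so `δ (a, b) = (1/(ab²), ab)` and
`δ² (a, b) = (1/a, 1/b)`. Along the `δ`-orbit of `(a, b)` the monomial `xy` thus takes the values
`ab, 1/b, 1/(ab)`, and along the orbit of `η (a, b) = (1/(ab²), b)` the same three values in
another order, so the two orbit sums cancel.
-/

noncomputable section

def xiOf (S : Finset (ℤ × ℤ)) (p : ℂ × ℂ) : ℂ × ℂ :=
  (p.1, (1 / p.2) * (∑ q ∈ S.filter (fun q => q.2 = -1), p.1 ^ q.1) /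
    (∑ q ∈ S.filter (fun q => q.2 = 1), p.1 ^ q.1))

def etaOf (S : Finset (ℤ × ℤ)) (p : ℂ × ℂ) : ℂ × ℂ :=
  ((1 / p.1) * (∑ q ∈ S.filter (fun q => q.1 = -1), p.2 ^ q.2) /
    (∑ q ∈ S.filter (fun q => q.1 = 1), p.2 ^ q.2), p.2)

def stepSet : Finset (ℤ × ℤ) := {(0, 1), (0, -1), (1, 1), (-1, -1)}

def deltaMonomial (p : ℂ × ℂ) : ℂ × ℂ := ((p.1 * p.2 ^ 2)⁻¹, p.1 * p.2)

end

theorem Function.iterate_apply_eq_of_eqOn {α : Type*} {f g : α → α} {s : Set α}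
    (hfg : Set.EqOn f g s) {p : α} {n : ℕ} (hs : ∀ k < n, f^[k] p ∈ s) : f^[n] p = g^[n] p := by
  induction n with
  | zero => rfl
  | succ n ih =>
    rw [Function.iterate_succ_apply', Function.iterate_succ_apply',
      ← ih fun k hk => hs k (by omega), hfg (hs n (by omega))]

-- `(1 + a⁻¹) / (1 + a) = a⁻¹` fails at `a = -1`, where Lean's `0 / 0 = 0`.
theorem xiOf_stepSet {p : ℂ × ℂ} (h₁ : p.1 ≠ 0) (h₂ : 1 + p.1 ≠ 0) :
    xiOf stepSet p = (p.1, (p.1 * p.2)⁻¹) := by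
  have hneg : stepSet.filter (fun q => q.2 = -1) = {(0, -1), (-1, -1)} := by decide
  have hpos : stepSet.filter (fun q => q.2 = 1) = {(0, 1), (1, 1)} := by decide
  simp only [xiOf, hneg, hpos, Prod.mk.injEq, true_and]
  rw [Finset.sum_pair (by decide), Finset.sum_pair (by decide)]
  simp only [zpow_zero, zpow_one, zpow_neg]
  field_simp
  ring

theorem etaOf_stepSet (p : ℂ × ℂ) : etaOf stepSet p = ((p.1 * p.2 ^ 2)⁻¹, p.2) := by
  have hneg : stepSet.filter (fun q => q.1 = -1) = {(-1, -1)} := by decide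
  have hpos : stepSet.filter (fun q => q.1 = 1) = {(1, 1)} := by decide
  simp only [etaOf, hneg, hpos, Finset.sum_singleton, Prod.mk.injEq, and_true]
  simp only [zpow_neg, zpow_one]
  ring

theorem xiOf_etaOf_stepSet {p : ℂ × ℂ} (h₁ : p.1 ≠ 0) (h₂ : p.2 ≠ 0)
    (h₃ : 1 + (etaOf stepSet p).1 ≠ 0) : xiOf stepSet (etaOf stepSet p) = deltaMonomial p := by
  rw [etaOf_stepSet] at h₃ ⊢
  rw [xiOf_stepSet (by simp [h₁, h₂]) h₃, deltaMonomial]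
  field_simp

theorem deltaMonomial_deltaMonomial {p : ℂ × ℂ} (h₁ : p.1 ≠ 0) (h₂ : p.2 ≠ 0) :
    deltaMonomial (deltaMonomial p) = (p.1⁻¹, p.2⁻¹) := by
  simp only [deltaMonomial, Prod.mk.injEq]
  constructor <;> field_simp

theorem sum_range_three_mul_deltaMonomial_iterate {p : ℂ × ℂ} (h₁ : p.1 ≠ 0) (h₂ : p.2 ≠ 0) :
    ∑ k ∈ Finset.range 3, (deltaMonomial^[k] p).1 * (deltaMonomial^[k] p).2 =
      p.1 * p.2 + p.2⁻¹ + (p.1 * p.2)⁻¹ := by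
  simp only [Finset.sum_range_succ, Finset.range_zero, Finset.sum_empty, zero_add,
    Function.iterate_zero_apply, Function.iterate_succ_apply',
    deltaMonomial_deltaMonomial h₁ h₂]
  simp only [deltaMonomial]
  field_simp

/-- For the step set `S = {(0,1),(0,-1),(1,1),(-1,-1)}`, with `ξ, η` the associated
group generators and `δ = ηξ` (acting on points as `ξ ∘ η`), the signed orbit sum
`Σ_{k=0}^{2} [ (xy)∘(ηδᵏ) − (xy)∘δᵏ ]` vanishes identically, on the domain where all
the expressions involved are defined and nonzero. -/
theorem stmt_7 (S : Finset (ℤ × ℤ))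
    (hS : S = ({(0, 1), (0, -1), (1, 1), (-1, -1)} : Finset (ℤ × ℤ)))
    (ξ η δ : ℂ × ℂ → ℂ × ℂ)
    (hξ : ∀ p : ℂ × ℂ, ξ p =
      (p.1, (1 / p.2) * (∑ q ∈ S.filter (fun q => q.2 = -1), p.1 ^ q.1) /
        (∑ q ∈ S.filter (fun q => q.2 = 1), p.1 ^ q.1)))
    (hη : ∀ p : ℂ × ℂ, η p =
      ((1 / p.1) * (∑ q ∈ S.filter (fun q => q.1 = -1), p.2 ^ q.2) /
        (∑ q ∈ S.filter (fun q => q.1 = 1), p.2 ^ q.2), p.2))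
    (hδ : ∀ p : ℂ × ℂ, δ p = ξ (η p))
    (x y : ℂ)
    (hdom : ∀ k : ℕ, ∀ q ∈ ({δ^[k] (x, y), δ^[k] (η (x, y)),
        η (δ^[k] (x, y)), η (δ^[k] (η (x, y)))} : Set (ℂ × ℂ)),
      q.1 ≠ 0 ∧ q.2 ≠ 0 ∧ 1 + q.1 ≠ 0) :
    ∑ k ∈ Finset.range 3,
        ((δ^[k] (η (x, y))).1 * (δ^[k] (η (x, y))).2 -
          (δ^[k] (x, y)).1 * (δ^[k] (x, y)).2) = 0 := by
  subst hS
  obtain rfl : ξ = xiOf stepSet := funext hξ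
  obtain rfl : η = etaOf stepSet := funext hη
  set good : Set (ℂ × ℂ) := {q | q.1 ≠ 0 ∧ q.2 ≠ 0 ∧ 1 + (etaOf stepSet q).1 ≠ 0}
  have hδ_eqOn : Set.EqOn δ deltaMonomial good := fun q ⟨h₁, h₂, h₃⟩ =>
    (hδ q).trans (xiOf_etaOf_stepSet h₁ h₂ h₃)
  have hgood : ∀ k, δ^[k] (x, y) ∈ good ∧ δ^[k] (etaOf stepSet (x, y)) ∈ good := fun k => by
    constructor <;>
      exact ⟨(hdom k _ (by simp)).1, (hdom k _ (by simp)).2.1, (hdom k _ (by simp)).2.2⟩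
  obtain ⟨hx, hy, -⟩ : x ≠ 0 ∧ y ≠ 0 ∧ _ := hdom 0 (x, y) (by simp)
  rw [Finset.sum_congr rfl fun k _ => by
      rw [Function.iterate_apply_eq_of_eqOn hδ_eqOn fun j _ => (hgood j).1,
        Function.iterate_apply_eq_of_eqOn hδ_eqOn fun j _ => (hgood j).2],
    Finset.sum_sub_distrib, etaOf_stepSet,
    sum_range_three_mul_deltaMonomial_iterate (p := (x, y)) hx hy,
    sum_range_three_mul_deltaMonomial_iterate (p := ((x * y ^ 2)⁻¹, y)) (by simp [hx, hy]) hy]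
  field_simp
  ring
end

section
/- Let S ⊆ {-1,0,1}² \ {(0,0)} be a vertically symmetric step set, with associated group generators ξ, η (so η(x,y) = (1/x,y)), δ = ηξ, c(x) = Σ_{(i,-1)∈S} x^{i+1}, f = c/(c∘η) = x², and ψ = ((xy)∘η − xy)/(z·(c∘η)). Then the following identity of rational functions holds: ψ + (ψ∘δ)/(f∘δ) = −(x²/(z·c))·(x − x∘η)·(y − y∘ξ), where x∘η and y∘ξ denote the first coordinate of η(x,y) and second coordinate of ξ(x,y) respectively. -/
/-!
Vertical symmetry of `S` makes every Laurent polynomial `∑_{(i,j)∈S} x^i` invariant under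
`x ↦ 1/x`. Hence `ξ` and `η` commute, so `δ(x,y) = (1/x, y∘ξ)` and `η(δ(x,y)) = ξ(x,y)`, and
`c(1/x) = c(x)/x²`. With these, both sides of the identity are `x(1 - x²)(y - y∘ξ)/(z·c(x))`.
-/

open Finset

section VerticalSymmetry

variable {K : Type*} (S : Finset (ℤ × ℤ)) (hsym : ∀ i j : ℤ, (i, j) ∈ S ↔ (-i, j) ∈ S)
include hsym

theorem sum_filter_snd_inv_zpow [DivisionSemiring K] (j : ℤ) (x : K) :
    ∑ q ∈ S.filter (fun q => q.2 = j), x⁻¹ ^ q.1 =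
      ∑ q ∈ S.filter (fun q => q.2 = j), x ^ q.1 := by
  have maps_to (q : ℤ × ℤ) (hq : q ∈ S.filter (fun q => q.2 = j)) :
      (-q.1, q.2) ∈ S.filter (fun q => q.2 = j) := by
    rw [mem_filter] at hq ⊢
    exact ⟨(hsym _ _).1 hq.1, hq.2⟩
  refine sum_nbij' (fun q => (-q.1, q.2)) (fun q => (-q.1, q.2)) maps_to maps_to
    (fun _ _ => by simp) (fun _ _ => by simp) (fun q _ => inv_zpow' x q.1)

theorem sum_filter_snd_inv_zpow_add_one [Field K] (j : ℤ) {x : K} (hx : x ≠ 0) :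
    ∑ q ∈ S.filter (fun q => q.2 = j), x⁻¹ ^ (q.1 + 1) =
      (∑ q ∈ S.filter (fun q => q.2 = j), x ^ (q.1 + 1)) / x ^ 2 := by
  simp only [zpow_add_one₀ hx, zpow_add_one₀ (inv_ne_zero hx), ← sum_mul,
    sum_filter_snd_inv_zpow S hsym]
  field_simp

end VerticalSymmetry

/-- The identity after substituting `c(1/x) = c(x)/x²`, `δ(x,y) = (1/x, w)` and
`η(δ(x,y)) = (x, w)`, where `C = c(x)` and `w = y∘ξ`. -/
theorem decoupling_identity {K : Type*} [Field K] {x : K} (hx : x ≠ 0) (y w z C : K) :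
    (x⁻¹ * y - x * y) / (z * (C / x ^ 2)) + (x * w - x⁻¹ * w) / (z * C) / x⁻¹ ^ 2 =
      -(x ^ 2 / (z * C)) * (x - x⁻¹) * (y - w) := by
  field_simp
  ring

theorem stmt_9_general (S : Finset (ℤ × ℤ))
    (hsym : ∀ i j : ℤ, (i, j) ∈ S ↔ (-i, j) ∈ S)
    (z : ℂ)
    (ξ η δ : ℂ × ℂ → ℂ × ℂ) (c : ℂ → ℂ) (f ψ : ℂ × ℂ → ℂ)
    (hξ : ∀ p : ℂ × ℂ, ξ p =
      (p.1, (1 / p.2) * (∑ q ∈ S.filter (fun q => q.2 = -1), p.1 ^ q.1) /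
        (∑ q ∈ S.filter (fun q => q.2 = 1), p.1 ^ q.1)))
    (hη : ∀ p : ℂ × ℂ, η p = (1 / p.1, p.2))
    (hδ : ∀ p : ℂ × ℂ, δ p = ξ (η p))
    (hc : ∀ t : ℂ, c t = ∑ q ∈ S.filter (fun q => q.2 = -1), t ^ (q.1 + 1))
    (hf : ∀ p : ℂ × ℂ, f p = p.1 ^ 2)
    (hψ : ∀ p : ℂ × ℂ, ψ p =
      ((η p).1 * (η p).2 - p.1 * p.2) / (z * c ((η p).1)))
    (x y : ℂ) (hx : x ≠ 0) :
    ψ (x, y) + ψ (δ (x, y)) / f (δ (x, y)) =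
      -(x ^ 2 / (z * c x)) * (x - (η (x, y)).1) * (y - (ξ (x, y)).2) := by
  have hξη : ξ (η (x, y)) = η (ξ (x, y)) := by
    simp only [hξ, hη, one_div, sum_filter_snd_inv_zpow S hsym]
  have hδxy : δ (x, y) = (1 / x, (ξ (x, y)).2) := by
    rw [hδ, hξη, hη, hξ]
  have hc_inv : c x⁻¹ = c x / x ^ 2 := by
    rw [hc, hc, sum_filter_snd_inv_zpow_add_one S hsym _ hx]
  rw [hψ, hψ, hf, hδxy, hη, hη]
  simp only [one_div, inv_inv, hc_inv]
  exact decoupling_identity hx y _ z (c x)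

/-- For a vertically symmetric small-step set `S` (so `η(x,y) = (1/x,y)`), with
`ξ` the other generator, `δ = ηξ` (acting on points as `ξ ∘ η`),
`c(x) = Σ_{(i,-1)∈S} x^{i+1}`, `f = c/(c∘η) = x²` and
`ψ = ((xy)∘η − xy)/(z·(c∘η))`, one has the identity
`ψ + (ψ∘δ)/(f∘δ) = −(x²/(z·c))·(x − x∘η)·(y − y∘ξ)`. -/
theorem stmt_9 (S : Finset (ℤ × ℤ))
    (hS : ∀ p ∈ S, p.1 ∈ ({-1, 0, 1} : Finset ℤ) ∧ p.2 ∈ ({-1, 0, 1} : Finset ℤ) ∧ p ≠ (0, 0))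
    (hsym : ∀ i j : ℤ, (i, j) ∈ S ↔ (-i, j) ∈ S)
    (hdown : ∃ i, (i, -1) ∈ S) (hup : ∃ i, (i, 1) ∈ S)
    (z : ℂ) (hz : z ≠ 0)
    (ξ η δ : ℂ × ℂ → ℂ × ℂ) (c : ℂ → ℂ) (f ψ : ℂ × ℂ → ℂ)
    (hξ : ∀ p : ℂ × ℂ, ξ p =
      (p.1, (1 / p.2) * (∑ q ∈ S.filter (fun q => q.2 = -1), p.1 ^ q.1) /
        (∑ q ∈ S.filter (fun q => q.2 = 1), p.1 ^ q.1)))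
    (hη : ∀ p : ℂ × ℂ, η p = (1 / p.1, p.2))
    (hδ : ∀ p : ℂ × ℂ, δ p = ξ (η p))
    (hc : ∀ t : ℂ, c t = ∑ q ∈ S.filter (fun q => q.2 = -1), t ^ (q.1 + 1))
    (hf : ∀ p : ℂ × ℂ, f p = p.1 ^ 2)
    (hψ : ∀ p : ℂ × ℂ, ψ p =
      ((η p).1 * (η p).2 - p.1 * p.2) / (z * c ((η p).1)))
    (x y : ℂ) (hx : x ≠ 0) (hy : y ≠ 0)
    (hBx : (∑ q ∈ S.filter (fun q => q.2 = 1), x ^ q.1) ≠ 0)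
    (hB1x : (∑ q ∈ S.filter (fun q => q.2 = 1), (1 / x) ^ q.1) ≠ 0)
    (hcx : c x ≠ 0) (hcx' : c (1 / x) ≠ 0) :
    ψ (x, y) + ψ (δ (x, y)) / f (δ (x, y)) =
      -(x ^ 2 / (z * c x)) * (x - (η (x, y)).1) * (y - (ξ (x, y)).2) :=
  stmt_9_general S hsym z ξ η δ c f ψ hξ hη hδ hc hf hψ x y hx
end

section
/- For the order-8 walk of Figure 1 (rightmost), with group generators ξ, η, δ = ηξ of order 4, and f, ψ defined by f = c·(c̃∘η)/(c̃·(c∘η)), ψ = c₀·(c̃∘η)/((c∘η)·c̃) − (c₀∘η)/(c∘η) with c₀ = −δ_{SW}F(0,0,z) − xy/z, the sum Σ_{k=0}^{3} (ψ∘δᵏ)/∏_{i=1}^{k}(f∘δⁱ) equals (y−1)(x²−1)(x²−y)(x²−y²)/(x·y⁴·z) identically as a rational function, hence does not vanish identically on the kernel curve K(x,y) = 0 for any z. -/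
set_option maxHeartbeats 1600000

/-- For the rightmost (order-8) walk of Figure 1, with step set
`S = {(-1,0),(-1,1),(1,-1),(1,0)}`, generators `ξ, η`, `δ = ηξ` of order 4 (acting on
points as `ξ ∘ η`), `c(x) = Σ_{(i,-1)∈S} x^{i+1}`, `c̃(y) = Σ_{(-1,j)∈S} y^{j+1}`,
`c₀ = −δ_{SW}·F₀ − xy/z`, `f = c·(c̃∘η)/(c̃·(c∘η))` and
`ψ = c₀·(c̃∘η)/((c∘η)·c̃) − (c₀∘η)/(c∘η)`, the sum
`Σ_{k=0}^{3} (ψ∘δᵏ)/∏_{i=1}^{k}(f∘δⁱ)` equals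
`(y−1)(x²−1)(x²−y)(x²−y²)/(x·y⁴·z)` identically, hence does not vanish identically on
the kernel curve `K(x,y) = 0`. -/
theorem stmt_13 (S : Finset (ℤ × ℤ))
    (hS : S = ({(-1, 0), (-1, 1), (1, -1), (1, 0)} : Finset (ℤ × ℤ)))
    (z : ℂ) (hz : z ≠ 0) (F₀ : ℂ)
    (ξ η δ : ℂ × ℂ → ℂ × ℂ) (c ct : ℂ → ℂ) (c₀ f ψ K : ℂ × ℂ → ℂ)
    (hξ : ∀ p : ℂ × ℂ, ξ p =
      (p.1, (1 / p.2) * (∑ q ∈ S.filter (fun q => q.2 = -1), p.1 ^ q.1) /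
        (∑ q ∈ S.filter (fun q => q.2 = 1), p.1 ^ q.1)))
    (hη : ∀ p : ℂ × ℂ, η p =
      ((1 / p.1) * (∑ q ∈ S.filter (fun q => q.1 = -1), p.2 ^ q.2) /
        (∑ q ∈ S.filter (fun q => q.1 = 1), p.2 ^ q.2), p.2))
    (hδ : ∀ p : ℂ × ℂ, δ p = ξ (η p))
    (hc : ∀ t : ℂ, c t = ∑ q ∈ S.filter (fun q => q.2 = -1), t ^ (q.1 + 1))
    (hct : ∀ t : ℂ, ct t = ∑ q ∈ S.filter (fun q => q.1 = -1), t ^ (q.2 + 1))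
    (hc₀ : ∀ p : ℂ × ℂ, c₀ p =
      -(if ((-1, -1) : ℤ × ℤ) ∈ S then F₀ else 0) - p.1 * p.2 / z)
    (hf : ∀ p : ℂ × ℂ, f p = c p.1 * ct (η p).2 / (ct p.2 * c (η p).1))
    (hψ : ∀ p : ℂ × ℂ, ψ p =
      c₀ p * ct (η p).2 / (c (η p).1 * ct p.2) - c₀ (η p) / c (η p).1)
    (hK : ∀ p : ℂ × ℂ, K p =
      p.1 * p.2 * ((∑ q ∈ S, p.1 ^ q.1 * p.2 ^ q.2) - 1 / z)) :
    (∀ x y : ℂ,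
      (∀ k : ℕ, (δ^[k] (x, y)).1 ≠ 0 ∧ (δ^[k] (x, y)).2 ≠ 0 ∧ 1 + (δ^[k] (x, y)).2 ≠ 0) →
      ∑ k ∈ Finset.range 4,
          ψ (δ^[k] (x, y)) / ∏ i ∈ Finset.Icc 1 k, f (δ^[i] (x, y)) =
        (y - 1) * (x ^ 2 - 1) * (x ^ 2 - y) * (x ^ 2 - y ^ 2) / (x * y ^ 4 * z)) ∧
      ∃ x y : ℂ,
        (∀ k : ℕ, (δ^[k] (x, y)).1 ≠ 0 ∧ (δ^[k] (x, y)).2 ≠ 0 ∧ 1 + (δ^[k] (x, y)).2 ≠ 0) ∧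
        K (x, y) = 0 ∧
        ∑ k ∈ Finset.range 4,
            ψ (δ^[k] (x, y)) / ∏ i ∈ Finset.Icc 1 k, f (δ^[i] (x, y)) ≠ 0 := by
  subst hS
  have F1 : (({(-1, 0), (-1, 1), (1, -1), (1, 0)} : Finset (ℤ × ℤ))).filter (fun q => q.2 = -1)
      = {(1,-1)} := by decide
  have F2 : (({(-1, 0), (-1, 1), (1, -1), (1, 0)} : Finset (ℤ × ℤ))).filter (fun q => q.2 = 1)
      = {(-1,1)} := by decide
  have F3 : (({(-1, 0), (-1, 1), (1, -1), (1, 0)} : Finset (ℤ × ℤ))).filter (fun q => q.1 = -1)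
      = {(-1,0),(-1,1)} := by decide
  have F4 : (({(-1, 0), (-1, 1), (1, -1), (1, 0)} : Finset (ℤ × ℤ))).filter (fun q => q.1 = 1)
      = {(1,-1),(1,0)} := by decide
  have hη' : ∀ a b : ℂ, b ≠ 0 → 1 + b ≠ 0 → η (a, b) = (b/a, b) := by
    intro a b hb hb1
    rw [hη]
    simp only [F3, F4]
    refine Prod.ext ?_ rfl
    simp only [Finset.sum_pair (show ((-1,0) : ℤ×ℤ) ≠ (-1,1) by decide),
      Finset.sum_pair (show ((1,-1) : ℤ×ℤ) ≠ (1,0) by decide),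
      Finset.sum_singleton]
    have h2 : (b:ℂ)⁻¹ + 1 ≠ 0 := by
      intro h
      apply hb1
      have : b * (b⁻¹ + 1) = b * 0 := by rw [h]
      rw [mul_add, mul_inv_cancel₀ hb, mul_zero] at this
      linear_combination this
    simp only [zpow_zero, zpow_one, zpow_neg_one]
    rcases eq_or_ne a 0 with ha | ha
    · simp [ha]
    · rw [div_eq_div_iff h2 ha]
      field_simp [ha, hb]
  have hδ' : ∀ a b : ℂ, a ≠ 0 → b ≠ 0 → 1 + b ≠ 0 → δ (a, b) = (b/a, b/a^2) := by
    intro a b ha hb hb1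
    rw [hδ, hη' a b hb hb1, hξ]
    simp only [F1, F2, Finset.sum_singleton]
    have hba : b/a ≠ 0 := div_ne_zero hb ha
    refine Prod.ext rfl ?_
    simp only [zpow_one, zpow_neg_one]
    rw [div_eq_div_iff (inv_ne_zero hba) (pow_ne_zero 2 ha)]
    field_simp [ha, hb]
  have hc' : ∀ t : ℂ, c t = t^2 := by
    intro t
    rw [hc, F1, Finset.sum_singleton]
    rw [show ((1:ℤ)+1) = ((2:ℕ):ℤ) by norm_num, zpow_natCast]
  have hct' : ∀ t : ℂ, ct t = t + t^2 := by
    intro t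
    rw [hct, F3, Finset.sum_pair (show ((-1,0) : ℤ×ℤ) ≠ (-1,1) by decide)]
    simp only [zero_add, zpow_one]
    rw [show ((1:ℤ)+1) = (2:ℤ) by norm_num, zpow_two]
    ring
  have hc₀' : ∀ p : ℂ × ℂ, c₀ p = -(p.1 * p.2 / z) := by
    intro p
    rw [hc₀]
    norm_num
  have hψ' : ∀ a b : ℂ, a ≠ 0 → b ≠ 0 → 1 + b ≠ 0 → ψ (a, b) = a * (b - a^2) / (b * z) := by
    intro a b ha hb hb1
    rw [hψ, hη' a b hb hb1]
    simp only [hc', hct', hc₀']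
    have hbb : b + b^2 ≠ 0 := by
      have : b + b^2 = b * (1+b) := by ring
      rw [this]; exact mul_ne_zero hb hb1
    have hba : b/a ≠ 0 := div_ne_zero hb ha
    rw [div_sub_div _ _ (mul_ne_zero (pow_ne_zero 2 hba) hbb) (pow_ne_zero 2 hba),
      div_eq_div_iff (mul_ne_zero (mul_ne_zero (pow_ne_zero 2 hba) hbb) (pow_ne_zero 2 hba))
        (mul_ne_zero hb hz)]
    field_simp [ha, hb, hz]
    ring
  have hf' : ∀ a b : ℂ, a ≠ 0 → b ≠ 0 → 1 + b ≠ 0 → f (a, b) = a^4 / b^2 := by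
    intro a b ha hb hb1
    rw [hf, hη' a b hb hb1]
    simp only [hc', hct']
    have hbb : b + b^2 ≠ 0 := by
      have : b + b^2 = b * (1+b) := by ring
      rw [this]; exact mul_ne_zero hb hb1
    have hba : b/a ≠ 0 := div_ne_zero hb ha
    rw [div_eq_div_iff (mul_ne_zero hbb (pow_ne_zero 2 hba)) (pow_ne_zero 2 hb)]
    field_simp [ha, hb]
  have main : ∀ x y : ℂ,
      (∀ k : ℕ, (δ^[k] (x, y)).1 ≠ 0 ∧ (δ^[k] (x, y)).2 ≠ 0 ∧ 1 + (δ^[k] (x, y)).2 ≠ 0) →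
      ∑ k ∈ Finset.range 4,
          ψ (δ^[k] (x, y)) / ∏ i ∈ Finset.Icc 1 k, f (δ^[i] (x, y)) =
        (y - 1) * (x ^ 2 - 1) * (x ^ 2 - y) * (x ^ 2 - y ^ 2) / (x * y ^ 4 * z) := by
    intro x y h
    obtain ⟨hx, hy, hy1⟩ := h 0
    simp only [Function.iterate_zero, id_eq] at hx hy hy1
    have e1 : δ^[1] (x, y) = (y/x, y/x^2) := by
      rw [Function.iterate_one]; exact hδ' x y hx hy hy1
    obtain ⟨ha1, hb1, hq1⟩ := h 1
    rw [e1] at ha1 hb1 hq1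
    simp only at ha1 hb1 hq1
    have e2 : δ^[2] (x, y) = (1/x, 1/y) := by
      rw [show (2:ℕ) = 1+1 from rfl, Function.iterate_succ_apply', e1,
        hδ' _ _ ha1 hb1 hq1]
      refine Prod.ext ?_ ?_ <;> simp only <;> rw [eq_comm] <;> field_simp [hx, hy] <;> ring
    obtain ⟨ha2, hb2, hq2⟩ := h 2
    rw [e2] at ha2 hb2 hq2
    simp only at ha2 hb2 hq2
    have e3 : δ^[3] (x, y) = (x/y, x^2/y) := by
      rw [show (3:ℕ) = 2+1 from rfl, Function.iterate_succ_apply', e2,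
        hδ' _ _ ha2 hb2 hq2]
      refine Prod.ext ?_ ?_ <;> simp only <;> rw [eq_comm] <;> field_simp [hx, hy] <;> ring
    obtain ⟨ha3, hb3, hq3⟩ := h 3
    rw [e3] at ha3 hb3 hq3
    simp only at ha3 hb3 hq3
    rw [Finset.sum_range_succ, Finset.sum_range_succ, Finset.sum_range_succ,
      Finset.sum_range_one]
    rw [show Finset.Icc 1 0 = (∅ : Finset ℕ) from by decide,
      show Finset.Icc 1 1 = ({1} : Finset ℕ) from by decide,
      show Finset.Icc 1 2 = ({1,2} : Finset ℕ) from by decide,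
      show Finset.Icc 1 3 = ({1,2,3} : Finset ℕ) from by decide]
    rw [Finset.prod_empty, Finset.prod_singleton,
      Finset.prod_pair (show (1:ℕ) ≠ 2 by norm_num),
      Finset.prod_insert (show (1:ℕ) ∉ ({2,3} : Finset ℕ) by decide),
      Finset.prod_pair (show (2:ℕ) ≠ 3 by norm_num)]
    simp only [Function.iterate_zero, id_eq, e1, e2, e3]
    rw [hψ' x y hx hy hy1, hψ' _ _ ha1 hb1 hq1, hψ' _ _ ha2 hb2 hq2, hψ' _ _ ha3 hb3 hq3,
      hf' _ _ ha1 hb1 hq1, hf' _ _ ha2 hb2 hq2, hf' _ _ ha3 hb3 hq3]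
    have t1 : ((y/x) * ((y/x^2) - (y/x)^2) / ((y/x^2)*z)) / ((y/x)^4/(y/x^2)^2)
        = (1-y)/(x*y*z) := by
      rw [div_eq_div_iff (div_ne_zero (pow_ne_zero 4 ha1) (pow_ne_zero 2 hb1))
        (mul_ne_zero (mul_ne_zero hx hy) hz)]
      field_simp [hx, hy, hz]
    have t2 : ((1/x) * ((1/y) - (1/x)^2) / ((1/y)*z)) / ((y/x)^4/(y/x^2)^2 * ((1/x)^4/(1/y)^2))
        = x*(x^2-y)/(y^4*z) := by
      rw [div_eq_div_iff (mul_ne_zero (div_ne_zero (pow_ne_zero 4 ha1) (pow_ne_zero 2 hb1))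
        (div_ne_zero (pow_ne_zero 4 ha2) (pow_ne_zero 2 hb2)))
        (mul_ne_zero (pow_ne_zero 4 hy) hz)]
      field_simp [hx, hy, hz]
    have t3 : ((x/y) * ((x^2/y) - (x/y)^2) / ((x^2/y)*z))
        / ((y/x)^4/(y/x^2)^2 * ((1/x)^4/(1/y)^2 * ((x/y)^4/(x^2/y)^2)))
        = x^5*(y-1)/(y^4*z) := by
      rw [div_eq_div_iff (mul_ne_zero (div_ne_zero (pow_ne_zero 4 ha1)
        (pow_ne_zero 2 hb1)) (mul_ne_zero (div_ne_zero (pow_ne_zero 4 ha2) (pow_ne_zero 2 hb2))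
        (div_ne_zero (pow_ne_zero 4 ha3) (pow_ne_zero 2 hb3))))
        (mul_ne_zero (pow_ne_zero 4 hy) hz)]
      field_simp [hx, hy, hz]
    rw [t1, t2, t3, div_one]
    rw [div_add_div _ _ (mul_ne_zero hy hz) (mul_ne_zero (mul_ne_zero hx hy) hz),
      div_add_div _ _ (mul_ne_zero (mul_ne_zero hy hz) (mul_ne_zero (mul_ne_zero hx hy) hz))
        (mul_ne_zero (pow_ne_zero 4 hy) hz),
      div_add_div _ _ (mul_ne_zero (mul_ne_zero (mul_ne_zero hy hz)
        (mul_ne_zero (mul_ne_zero hx hy) hz)) (mul_ne_zero (pow_ne_zero 4 hy) hz))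
        (mul_ne_zero (pow_ne_zero 4 hy) hz),
      div_eq_div_iff (mul_ne_zero (mul_ne_zero (mul_ne_zero (mul_ne_zero hy hz)
        (mul_ne_zero (mul_ne_zero hx hy) hz)) (mul_ne_zero (pow_ne_zero 4 hy) hz))
        (mul_ne_zero (pow_ne_zero 4 hy) hz))
        (mul_ne_zero (mul_ne_zero hx (pow_ne_zero 4 hy)) hz)]
    ring
  have exgood : ∃ α m x : ℂ, α ≠ 0 ∧ α^2 ≠ 1 ∧ x^2 = m*x - 1 ∧ (1:ℂ)/z = m + α + 1/α ∧
      x ≠ 0 ∧ x ≠ 1 ∧ x ≠ -1 ∧ x ≠ α ∧ x ≠ -α ∧ α*x ≠ 1 ∧ α*x ≠ -1 := by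
    have hs0 : (1:ℂ)/z ≠ 0 := one_div_ne_zero hz
    obtain ⟨α, m, hα0, hα1, hm2, hm2', hmp, hmm, hs⟩ :
        ∃ α m : ℂ, α ≠ 0 ∧ α^2 ≠ 1 ∧ m ≠ 2 ∧ m ≠ -2 ∧ m*α ≠ α^2+1 ∧ m*α ≠ -(α^2+1) ∧
          (1:ℂ)/z = m + α + 1/α := by
      by_cases hA : (1:ℂ)/z = 5 ∨ (1:ℂ)/z = 9/2 ∨ (1:ℂ)/z = 1/2
      · refine ⟨3, 1/z - 10/3, by norm_num, by norm_num, ?_, ?_, ?_, ?_, by ring⟩ <;>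
          · rcases hA with h | h | h <;> rw [h] <;> intro hc <;> norm_num at hc
      · push_neg at hA
        obtain ⟨h5, h92, h12⟩ := hA
        refine ⟨2, 1/z - 5/2, by norm_num, by norm_num, ?_, ?_, ?_, ?_, by ring⟩ <;> intro hc
        · apply h92; linear_combination hc
        · apply h12; linear_combination hc
        · apply h5; linear_combination hc/2
        · apply hs0; linear_combination hc/2
    obtain ⟨w, hw⟩ := IsAlgClosed.exists_pow_nat_eq (m^2 - 4) (n := 2) (by norm_num)
    have h2 : ((m+w)/2)^2 = m*((m+w)/2) - 1 := by linear_combination hw/4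
    refine ⟨α, m, (m+w)/2, hα0, hα1, h2, hs, ?_, ?_, ?_, ?_, ?_, ?_, ?_⟩
    · intro h; rw [h] at h2; simp at h2
    · intro h; rw [h] at h2; exact hm2 (by linear_combination -h2)
    · intro h; rw [h] at h2; exact hm2' (by linear_combination h2)
    · intro h; rw [h] at h2; exact hmp (by linear_combination -h2)
    · intro h; rw [h] at h2; exact hmm (by linear_combination h2)
    · intro h
      have hx : (m+w)/2 = 1/α := by rw [eq_div_iff hα0]; linear_combination h
      rw [hx] at h2
      field_simp [hα0] at h2
      have h3 : (1:ℂ) = (m-α)*α := mul_left_cancel₀ hα0 (by linear_combination α * h2)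
      exact hmp (by linear_combination -h3)
    · intro h
      have hx : (m+w)/2 = -1/α := by rw [eq_div_iff hα0]; linear_combination h
      rw [hx] at h2
      field_simp [hα0] at h2
      have h3 : (1:ℂ) = (-m-α)*α := mul_left_cancel₀ hα0 (by linear_combination α * h2)
      exact hmm (by linear_combination h3)
  refine ⟨main, ?_⟩
  obtain ⟨α, m, x, hα0, hα1, hx2, hs, hx0, hx1, hxm1, hxα, hxmα, hax1, haxm1⟩ := exgood
  set y : ℂ := α * x with hydef
  have hy0 : y ≠ 0 := mul_ne_zero hα0 hx0
  have h1y : 1 + y ≠ 0 := by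
    intro hc; exact haxm1 (by linear_combination hc)
  have hy1 : y ≠ 1 := hax1
  have hym1 : y ≠ -1 := by intro hc; exact haxm1 hc
  have hx2y : x^2 + y ≠ 0 := by
    intro hc
    apply hxmα
    have : x * (x + α) = 0 := by linear_combination hc
    rcases mul_eq_zero.1 this with h | h
    · exact absurd h hx0
    · linear_combination h
  have hx2ny : x^2 - y ≠ 0 := by
    intro hc
    apply hxα
    have : x * (x - α) = 0 := by linear_combination hc
    rcases mul_eq_zero.1 this with h | h
    · exact absurd h hx0
    · linear_combination h
  -- the four points
  have q1a : y/x ≠ 0 := div_ne_zero hy0 hx0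
  have q1b : y/x^2 ≠ 0 := div_ne_zero hy0 (pow_ne_zero 2 hx0)
  have q1c : 1 + y/x^2 ≠ 0 := by
    intro hc
    apply hx2y
    have : x^2 * (1 + y/x^2) = x^2 * 0 := by rw [hc]
    rw [mul_zero, mul_add, mul_one, mul_div_cancel₀ _ (pow_ne_zero 2 hx0)] at this
    linear_combination this
  have q2a : x⁻¹ ≠ 0 := inv_ne_zero hx0
  have q2b : y⁻¹ ≠ 0 := inv_ne_zero hy0
  have q2c : 1 + y⁻¹ ≠ 0 := by
    intro hc
    apply h1y
    have : y * (1 + y⁻¹) = y * 0 := by rw [hc]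
    rw [mul_zero, mul_add, mul_one, mul_inv_cancel₀ hy0] at this
    linear_combination this
  have q3a : x/y ≠ 0 := div_ne_zero hx0 hy0
  have q3b : x^2/y ≠ 0 := div_ne_zero (pow_ne_zero 2 hx0) hy0
  have q3c : 1 + x^2/y ≠ 0 := by
    intro hc
    apply hx2y
    have : y * (1 + x^2/y) = y * 0 := by rw [hc]
    rw [mul_zero, mul_add, mul_one, mul_div_cancel₀ _ hy0] at this
    linear_combination this
  have d1 : δ (x, y) = (y/x, y/x^2) := hδ' x y hx0 hy0 h1y
  have d2 : δ (y/x, y/x^2) = (x⁻¹, y⁻¹) := by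
    rw [hδ' _ _ q1a q1b q1c]
    refine Prod.ext ?_ ?_ <;> simp only <;> rw [eq_comm] <;> field_simp [hx0, hy0] <;> ring
  have d3 : δ (x⁻¹, y⁻¹) = (x/y, x^2/y) := by
    rw [hδ' _ _ q2a q2b q2c]
    refine Prod.ext ?_ ?_ <;> simp only <;> rw [eq_comm] <;> field_simp [hx0, hy0] <;> ring
  have d4 : δ (x/y, x^2/y) = (x, y) := by
    rw [hδ' _ _ q3a q3b q3c]
    refine Prod.ext ?_ ?_ <;> simp only <;> rw [eq_comm] <;> field_simp [hx0, hy0] <;> ring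
  have cyc : ∀ k : ℕ, δ^[k] (x, y) =
      if k % 4 = 0 then (x, y) else if k % 4 = 1 then (y/x, y/x^2)
      else if k % 4 = 2 then (x⁻¹, y⁻¹) else (x/y, x^2/y) := by
    intro k
    induction k with
    | zero => simp
    | succ n ih =>
      rw [Function.iterate_succ_apply', ih]
      have h4 : n % 4 = 0 ∨ n % 4 = 1 ∨ n % 4 = 2 ∨ n % 4 = 3 := by omega
      rcases h4 with h | h | h | h <;>
        rw [h] <;>
        · have : (n+1) % 4 = (n % 4 + 1) % 4 := by omega
          rw [this]
          simp [h, d1, d2, d3, d4]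
  have cond : ∀ k : ℕ, (δ^[k] (x, y)).1 ≠ 0 ∧ (δ^[k] (x, y)).2 ≠ 0 ∧ 1 + (δ^[k] (x, y)).2 ≠ 0 := by
    intro k
    rw [cyc k]
    have h4 : k % 4 = 0 ∨ k % 4 = 1 ∨ k % 4 = 2 ∨ k % 4 = 3 := by omega
    rcases h4 with h | h | h | h <;> rw [h]
    · rw [if_pos rfl]; exact ⟨hx0, hy0, h1y⟩
    · rw [if_neg (by norm_num), if_pos rfl]; exact ⟨q1a, q1b, q1c⟩
    · rw [if_neg (by norm_num), if_neg (by norm_num), if_pos rfl]; exact ⟨q2a, q2b, q2c⟩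
    · rw [if_neg (by norm_num), if_neg (by norm_num), if_neg (by norm_num)]
      exact ⟨q3a, q3b, q3c⟩
  refine ⟨x, y, cond, ?_, ?_⟩
  · rw [hK]
    simp only
    rw [show ({(-1, 0), (-1, 1), (1, -1), (1, 0)} : Finset (ℤ × ℤ))
        = insert ((-1 : ℤ), (0 : ℤ)) (insert ((-1 : ℤ),(1:ℤ)) (insert ((1:ℤ),(-1:ℤ)) {((1:ℤ),(0:ℤ))})) from rfl,
      Finset.sum_insert (by decide), Finset.sum_insert (by decide),
      Finset.sum_insert (by decide), Finset.sum_singleton]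
    simp only [zpow_zero, zpow_one, zpow_neg_one, mul_one]
    rw [hs, hydef]
    field_simp [hx0, hα0]
    linear_combination (α*x) * hx2
  · rw [main x y cond]
    apply div_ne_zero
    · apply mul_ne_zero (mul_ne_zero (mul_ne_zero (sub_ne_zero.2 hy1) ?_) hx2ny) ?_
      · intro hc
        have : (x-1)*(x+1) = 0 := by linear_combination hc
        rcases mul_eq_zero.1 this with h | h
        · exact hx1 (by linear_combination h)
        · exact hxm1 (by linear_combination h)
      · intro hc
        have hfact : (x - y)*(x + y) = 0 := by linear_combination hc
        rcases mul_eq_zero.1 hfact with h | h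
        · have h2 : x * (1 - α) = 0 := by rw [hydef] at h; linear_combination h
          rcases mul_eq_zero.1 h2 with h3 | h3
          · exact hx0 h3
          · exact hα1 (by rw [show α = 1 by linear_combination -h3]; norm_num)
        · have h2 : x * (1 + α) = 0 := by rw [hydef] at h; linear_combination h
          rcases mul_eq_zero.1 h2 with h3 | h3
          · exact hx0 h3
          · exact hα1 (by rw [show α = -1 by linear_combination h3]; norm_num)
    · exact mul_ne_zero (mul_ne_zero hx0 (pow_ne_zero 4 hy0)) hz
end

section
/- Let r_{i,j}, for i,j ∈ {-1,0,1}, be the coefficients of a kernel R(x,y) = xy(Σ_{i,j} r_{i,j} x^i y^j − 1/z), and suppose the birational maps ξ(x,y) = (x, (Σ_i r_{i,-1} x^i)/(y·Σ_i r_{i,1} x^i)) and η(x,y) = ((Σ_j r_{-1,j} y^j)/(x·Σ_j r_{1,j} y^j), y) are well defined. If the determinant of the 3×3 matrix with rows (r_{1,1}, r_{1,0}, r_{1,-1}), (r_{0,1}, r_{0,0} − 1/z, r_{0,-1}), (r_{-1,1}, r_{-1,0}, r_{-1,-1}) vanishes, then (ηξ)² = id on the curve R(x,y) = 0, i.e.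 the group of the walk restricted to the curve has order dividing 4. -/
private lemma para3 (a1 a2 a3 b1 b2 b3 : ℂ)
    (h1 : a2*b3 = a3*b2) (h2 : a3*b1 = a1*b3) (h3 : a1*b2 = a2*b1)
    (ha : ¬(a1 = 0 ∧ a2 = 0 ∧ a3 = 0)) :
    ∃ μ : ℂ, b1 = μ*a1 ∧ b2 = μ*a2 ∧ b3 = μ*a3 := by
  by_cases e1 : a1 = 0
  · by_cases e2 : a2 = 0
    · have e3 : a3 ≠ 0 := fun h => ha ⟨e1, e2, h⟩
      refine ⟨b3/a3, ?_, ?_, ?_⟩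
      · have : a3*b1 = 0 := by rw [h2, e1]; ring
        rcases mul_eq_zero.mp this with h | h
        · exact absurd h e3
        · rw [h, e1]; ring
      · have : a3*b2 = 0 := by rw [← h1, e2]; ring
        rcases mul_eq_zero.mp this with h | h
        · exact absurd h e3
        · rw [h, e2]; ring
      · field_simp
    · refine ⟨b2/a2, ?_, ?_, ?_⟩
      · have : a2*b1 = 0 := by rw [← h3, e1]; ring
        rcases mul_eq_zero.mp this with h | h
        · exact absurd h e2
        · rw [h, e1]; ring
      · field_simp
      · field_simp
        linear_combination h1
  · refine ⟨b1/a1, ?_, ?_, ?_⟩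
    · field_simp
    · field_simp
      linear_combination h3
    · field_simp
      linear_combination -h2

private lemma core (r11 r10 r1m r01 r00 r0m rm1 rm0 rmm x y x' y' : ℂ)
    (hx : x ≠ 0) (hy : y ≠ 0) (hx' : x' ≠ 0) (hy' : y' ≠ 0)
    (hAy : r11*y^2 + r10*y + r1m ≠ 0)
    (hAy' : r11*y'^2 + r10*y' + r1m ≠ 0)
    (hPx' : r11*x'^2 + r01*x' + rm1 ≠ 0)
    (h1 : x^2*(r11*y^2 + r10*y + r1m) + x*(r01*y^2 + r00*y + r0m)
        + (rm1*y^2 + rm0*y + rmm) = 0)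
    (hV1 : x*x'*(r11*y^2 + r10*y + r1m) = rm1*y^2 + rm0*y + rmm)
    (hV2 : y*y'*(r11*x'^2 + r01*x' + rm1) = r1m*x'^2 + r0m*x' + rmm)
    (hdet : r11*(r00*rmm - r0m*rm0) - r10*(r01*rmm - r0m*rm1)
        + r1m*(r01*rm0 - r00*rm1) = 0) :
    rm1*y'^2 + rm0*y' + rmm = x*x'*(r11*y'^2 + r10*y' + r1m)
    ∧ r1m*x^2 + r0m*x + rmm = y*y'*(r11*x^2 + r01*x + rm1) := by
  -- abbreviations (purely textual below):
  -- A = r11*y^2+r10*y+r1m, B = r01*y^2+r00*y+r0m, C = rm1*y^2+rm0*y+rmm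
  -- A' B' C' at y'; P Q Rr at x' (columns); Px Qx Rx at x
  have hS : x*(r11*y^2 + r10*y + r1m) + (r01*y^2 + r00*y + r0m)
      + x'*(r11*y^2 + r10*y + r1m) = 0 := by
    apply mul_left_cancel₀ hx; rw [mul_zero]
    linear_combination h1 + hV1
  have h2 : x'^2*(r11*y^2 + r10*y + r1m) + x'*(r01*y^2 + r00*y + r0m)
      + (rm1*y^2 + rm0*y + rmm) = 0 := by
    linear_combination x'*hS - hV1
  have hS2 : y*(r11*x'^2 + r01*x' + rm1) + (r10*x'^2 + r00*x' + rm0)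
      + y'*(r11*x'^2 + r01*x' + rm1) = 0 := by
    apply mul_left_cancel₀ hy; rw [mul_zero]
    linear_combination h2 + hV2
  have h3 : y'^2*(r11*x'^2 + r01*x' + rm1) + y'*(r10*x'^2 + r00*x' + rm0)
      + (r1m*x'^2 + r0m*x' + rmm) = 0 := by
    linear_combination y'*hS2 - hV2
  have h2h : x'^2*(r11*y'^2 + r10*y' + r1m) + x'*(r01*y'^2 + r00*y' + r0m)
      + (rm1*y'^2 + rm0*y' + rmm) = 0 := by
    linear_combination h3
  have key1 : r11*((r01*y^2 + r00*y + r0m)*(rm1*y'^2 + rm0*y' + rmm)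
        - (rm1*y^2 + rm0*y + rmm)*(r01*y'^2 + r00*y' + r0m))
      + r01*((rm1*y^2 + rm0*y + rmm)*(r11*y'^2 + r10*y' + r1m)
        - (r11*y^2 + r10*y + r1m)*(rm1*y'^2 + rm0*y' + rmm))
      + rm1*((r11*y^2 + r10*y + r1m)*(r01*y'^2 + r00*y' + r0m)
        - (r01*y^2 + r00*y + r0m)*(r11*y'^2 + r10*y' + r1m)) = 0 := by
    linear_combination (y - y')*hdet
  have key2 : r11*((r10*x'^2 + r00*x' + rm0)*(r1m*x^2 + r0m*x + rmm)
        - (r1m*x'^2 + r0m*x' + rmm)*(r10*x^2 + r00*x + rm0))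
      + r10*((r1m*x'^2 + r0m*x' + rmm)*(r11*x^2 + r01*x + rm1)
        - (r11*x'^2 + r01*x' + rm1)*(r1m*x^2 + r0m*x + rmm))
      + r1m*((r11*x'^2 + r01*x' + rm1)*(r10*x^2 + r00*x + rm0)
        - (r10*x'^2 + r00*x' + rm0)*(r11*x^2 + r01*x + rm1)) = 0 := by
    linear_combination (x' - x)*hdet
  -- Part 1
  obtain ⟨hI, hG⟩ : (rm1*y'^2 + rm0*y' + rmm = x*x'*(r11*y'^2 + r10*y' + r1m))
      ∧ (x^2*(r11*y'^2 + r10*y' + r1m) + x*(r01*y'^2 + r00*y' + r0m)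
        + (rm1*y'^2 + rm0*y' + rmm) = 0) := by
    by_cases hpar :
        ((r01*y^2 + r00*y + r0m)*(rm1*y'^2 + rm0*y' + rmm)
          - (rm1*y^2 + rm0*y + rmm)*(r01*y'^2 + r00*y' + r0m) = 0)
        ∧ ((rm1*y^2 + rm0*y + rmm)*(r11*y'^2 + r10*y' + r1m)
          - (r11*y^2 + r10*y + r1m)*(rm1*y'^2 + rm0*y' + rmm) = 0)
        ∧ ((r11*y^2 + r10*y + r1m)*(r01*y'^2 + r00*y' + r0m)
          - (r01*y^2 + r00*y + r0m)*(r11*y'^2 + r10*y' + r1m) = 0)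
    · constructor
      · apply mul_left_cancel₀ hAy
        linear_combination -hpar.2.1 - (r11*y'^2 + r10*y' + r1m)*hV1
      · apply mul_left_cancel₀ hAy; rw [mul_zero]
        linear_combination (r11*y'^2 + r10*y' + r1m)*h1 + x*hpar.2.2 - hpar.2.1
    · exfalso
      obtain ⟨μ, e1, e2, e3⟩ := para3 _ _ _ (x'^2) x' 1
        (by linear_combination (r11*y'^2 + r10*y' + r1m)*h2
            - (r11*y^2 + r10*y + r1m)*h2h)
        (by linear_combination (r01*y'^2 + r00*y' + r0m)*h2
            - (r01*y^2 + r00*y + r0m)*h2h)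
        (by linear_combination (rm1*y'^2 + rm0*y' + rmm)*h2
            - (rm1*y^2 + rm0*y + rmm)*h2h)
        hpar
      exact hPx' (by linear_combination r11*e1 + r01*e2 + rm1*e3 + μ*key1)
  refine ⟨hI, ?_⟩
  -- Part 2
  have hv4 : y'^2*(r11*x^2 + r01*x + rm1) + y'*(r10*x^2 + r00*x + rm0)
      + (r1m*x^2 + r0m*x + rmm) = 0 := by
    linear_combination hG
  by_cases hq :
      ((r10*x'^2 + r00*x' + rm0)*(r1m*x^2 + r0m*x + rmm)
        - (r1m*x'^2 + r0m*x' + rmm)*(r10*x^2 + r00*x + rm0) = 0)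
      ∧ ((r1m*x'^2 + r0m*x' + rmm)*(r11*x^2 + r01*x + rm1)
        - (r11*x'^2 + r01*x' + rm1)*(r1m*x^2 + r0m*x + rmm) = 0)
      ∧ ((r11*x'^2 + r01*x' + rm1)*(r10*x^2 + r00*x + rm0)
        - (r10*x'^2 + r00*x' + rm0)*(r11*x^2 + r01*x + rm1) = 0)
  · apply mul_left_cancel₀ hPx'
    linear_combination -hq.2.1 - (r11*x^2 + r01*x + rm1)*hV2
  · exfalso
    obtain ⟨μ, e1, e2, e3⟩ := para3 _ _ _ (y^2) y 1
      (by linear_combination (r11*x^2 + r01*x + rm1)*h2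
          - (r11*x'^2 + r01*x' + rm1)*h1)
      (by linear_combination (r10*x^2 + r00*x + rm0)*h2
          - (r10*x'^2 + r00*x' + rm0)*h1)
      (by linear_combination (r1m*x^2 + r0m*x + rmm)*h2
          - (r1m*x'^2 + r0m*x' + rmm)*h1)
      hq
    exact hAy (by linear_combination r11*e1 + r10*e2 + r1m*e3 + μ*key2)

/-- Order-4 criterion: if the determinant of the matrix
`!![r₁₁, r₁₀, r₁₋₁; r₀₁, r₀₀ − 1/z, r₀₋₁; r₋₁₁, r₋₁₀, r₋₁₋₁]` vanishes, then
`(ηξ)² = id` on the kernel curve `R(x,y) = 0` (at points where all the maps are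
defined), i.e. the group of the walk restricted to the curve has order dividing 4.
Here `δ = ηξ` acts on points of the curve as `ξ ∘ η`. -/
theorem stmt_14 (r : ℤ × ℤ → ℂ) (z : ℂ) (hz : z ≠ 0)
    (ξ η δ : ℂ × ℂ → ℂ × ℂ) (R : ℂ × ℂ → ℂ)
    (hξ : ∀ p : ℂ × ℂ, ξ p =
      (p.1, (∑ i ∈ ({-1, 0, 1} : Finset ℤ), r (i, -1) * p.1 ^ i) /
        (p.2 * ∑ i ∈ ({-1, 0, 1} : Finset ℤ), r (i, 1) * p.1 ^ i)))
    (hη : ∀ p : ℂ × ℂ, η p =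
      ((∑ j ∈ ({-1, 0, 1} : Finset ℤ), r (-1, j) * p.2 ^ j) /
        (p.1 * ∑ j ∈ ({-1, 0, 1} : Finset ℤ), r (1, j) * p.2 ^ j), p.2))
    (hδ : ∀ p : ℂ × ℂ, δ p = ξ (η p))
    (hR : ∀ p : ℂ × ℂ, R p = p.1 * p.2 *
      ((∑ i ∈ ({-1, 0, 1} : Finset ℤ), ∑ j ∈ ({-1, 0, 1} : Finset ℤ),
          r (i, j) * p.1 ^ i * p.2 ^ j) - 1 / z))
    (hdet : Matrix.det
      !![r (1, 1), r (1, 0), r (1, -1);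
         r (0, 1), r (0, 0) - 1 / z, r (0, -1);
         r (-1, 1), r (-1, 0), r (-1, -1)] = 0) :
    ∀ x y : ℂ, R (x, y) = 0 →
      (∀ q ∈ ({(x, y), δ (x, y)} : Set (ℂ × ℂ)),
        q.1 ≠ 0 ∧ q.2 ≠ 0 ∧
        (∑ j ∈ ({-1, 0, 1} : Finset ℤ), r (1, j) * q.2 ^ j) ≠ 0 ∧
        (∑ j ∈ ({-1, 0, 1} : Finset ℤ), r (-1, j) * q.2 ^ j) ≠ 0 ∧
        (∑ i ∈ ({-1, 0, 1} : Finset ℤ), r (i, 1) * (η q).1 ^ i) ≠ 0 ∧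
        (∑ i ∈ ({-1, 0, 1} : Finset ℤ), r (i, -1) * (η q).1 ^ i) ≠ 0) →
      δ (δ (x, y)) = (x, y) := by
  intro x y hxy hcond
  have esum3 : ∀ g : ℤ → ℂ, ∑ i ∈ ({-1, 0, 1} : Finset ℤ), g i = g (-1) + g 0 + g 1 := by
    intro g
    rw [show ({-1, 0, 1} : Finset ℤ) = insert (-1) (insert 0 {1}) from rfl,
      Finset.sum_insert (by norm_num), Finset.sum_insert (by norm_num),
      Finset.sum_singleton, ← add_assoc]
  have esum : ∀ (f : ℤ → ℂ) (t : ℂ),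
      (∑ j ∈ ({-1, 0, 1} : Finset ℤ), f j * t ^ j) = f (-1) * t⁻¹ + f 0 + f 1 * t := by
    intro f t
    rw [esum3]
    norm_num
  simp only [Matrix.det_fin_three, Matrix.cons_val', Matrix.cons_val_zero, Matrix.cons_val_one,
    Matrix.head_cons, Matrix.cons_val_two, Matrix.tail_cons, Matrix.empty_val',
    Matrix.cons_val_fin_one, Matrix.head_fin_const, Matrix.of_apply] at hdet
  obtain ⟨hx, hy, hDy, hNy, hDx₁, hNx₁⟩ := hcond (x, y) (Set.mem_insert _ _)
  have hx0 : x ≠ 0 := hx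
  have hy0 : y ≠ 0 := hy
  simp only [esum] at hDy hNy hDx₁ hNx₁
  have hηxy : η (x, y) =
      ((r (-1, -1) * y⁻¹ + r (-1, 0) + r (-1, 1) * y) /
        (x * (r (1, -1) * y⁻¹ + r (1, 0) + r (1, 1) * y)), y) := by
    rw [hη]; simp only [esum]
  obtain ⟨x₁, hx₁def⟩ : ∃ t : ℂ, t = (r (-1, -1) * y⁻¹ + r (-1, 0) + r (-1, 1) * y) /
      (x * (r (1, -1) * y⁻¹ + r (1, 0) + r (1, 1) * y)) := ⟨_, rfl⟩
  rw [← hx₁def] at hηxy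
  rw [hηxy] at hDx₁ hNx₁
  have hDx₁' : r (-1, 1) * x₁⁻¹ + r (0, 1) + r (1, 1) * x₁ ≠ 0 := hDx₁
  have hNx₁' : r (-1, -1) * x₁⁻¹ + r (0, -1) + r (1, -1) * x₁ ≠ 0 := hNx₁
  have hδxy : δ (x, y) = (x₁,
      (r (-1, -1) * x₁⁻¹ + r (0, -1) + r (1, -1) * x₁) /
        (y * (r (-1, 1) * x₁⁻¹ + r (0, 1) + r (1, 1) * x₁))) := by
    rw [hδ, hηxy, hξ]; simp only [esum]
  obtain ⟨y₁, hy₁def⟩ : ∃ t : ℂ, t = (r (-1, -1) * x₁⁻¹ + r (0, -1) + r (1, -1) * x₁) /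
      (y * (r (-1, 1) * x₁⁻¹ + r (0, 1) + r (1, 1) * x₁)) := ⟨_, rfl⟩
  rw [← hy₁def] at hδxy
  obtain ⟨hx₁m, hy₁m, hDy₁, hNy₁, hDx₂, hNx₂⟩ := hcond (δ (x, y))
    (Set.mem_insert_iff.mpr (Or.inr (Set.mem_singleton _)))
  rw [hδxy] at hx₁m hy₁m hDy₁ hNy₁ hDx₂ hNx₂
  have hx₁n : x₁ ≠ 0 := hx₁m
  have hy₁n : y₁ ≠ 0 := hy₁m
  simp only [esum] at hDy₁ hNy₁ hDx₂ hNx₂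
  have hDy₁' : r (1, -1) * y₁⁻¹ + r (1, 0) + r (1, 1) * y₁ ≠ 0 := hDy₁
  have hηq2 : η (x₁, y₁) =
      ((r (-1, -1) * y₁⁻¹ + r (-1, 0) + r (-1, 1) * y₁) /
        (x₁ * (r (1, -1) * y₁⁻¹ + r (1, 0) + r (1, 1) * y₁)), y₁) := by
    rw [hη]; simp only [esum]
  obtain ⟨x₂, hx₂def⟩ : ∃ t : ℂ, t = (r (-1, -1) * y₁⁻¹ + r (-1, 0) + r (-1, 1) * y₁) /
      (x₁ * (r (1, -1) * y₁⁻¹ + r (1, 0) + r (1, 1) * y₁)) := ⟨_, rfl⟩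
  rw [← hx₂def] at hηq2
  rw [hηq2] at hDx₂ hNx₂
  have hDx₂' : r (-1, 1) * x₂⁻¹ + r (0, 1) + r (1, 1) * x₂ ≠ 0 := hDx₂
  -- the curve equation
  rw [hR] at hxy
  simp only [esum3] at hxy
  simp only [zpow_neg_one, zpow_zero, zpow_one] at hxy
  have hxy' : ((r (-1, -1) * x⁻¹ * y⁻¹ + r (-1, 0) * x⁻¹ + r (-1, 1) * x⁻¹ * y) +
      (r (0, -1) * y⁻¹ + r (0, 0) + r (0, 1) * y) +
      (r (1, -1) * x * y⁻¹ + r (1, 0) * x + r (1, 1) * x * y) - 1 / z) = 0 := by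
    rcases mul_eq_zero.mp hxy with h | h
    · exact absurd h (mul_ne_zero hx0 hy0)
    · linear_combination h
  obtain ⟨w, hw⟩ : ∃ t : ℂ, t = 1 / z := ⟨_, rfl⟩
  rw [← hw] at hdet hxy'
  -- bridge identities between "inverse" and "polynomial" forms
  have bA : y * (r (1, -1) * y⁻¹ + r (1, 0) + r (1, 1) * y)
      = r (1, 1) * y ^ 2 + r (1, 0) * y + r (1, -1) := by
    linear_combination r (1, -1) * mul_inv_cancel₀ hy0
  have bC : y * (r (-1, -1) * y⁻¹ + r (-1, 0) + r (-1, 1) * y)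
      = r (-1, 1) * y ^ 2 + r (-1, 0) * y + r (-1, -1) := by
    linear_combination r (-1, -1) * mul_inv_cancel₀ hy0
  have bDx₁ : x₁ * (r (-1, 1) * x₁⁻¹ + r (0, 1) + r (1, 1) * x₁)
      = r (1, 1) * x₁ ^ 2 + r (0, 1) * x₁ + r (-1, 1) := by
    linear_combination r (-1, 1) * mul_inv_cancel₀ hx₁n
  have bNx₁ : x₁ * (r (-1, -1) * x₁⁻¹ + r (0, -1) + r (1, -1) * x₁)
      = r (1, -1) * x₁ ^ 2 + r (0, -1) * x₁ + r (-1, -1) := by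
    linear_combination r (-1, -1) * mul_inv_cancel₀ hx₁n
  have bDy₁ : y₁ * (r (1, -1) * y₁⁻¹ + r (1, 0) + r (1, 1) * y₁)
      = r (1, 1) * y₁ ^ 2 + r (1, 0) * y₁ + r (1, -1) := by
    linear_combination r (1, -1) * mul_inv_cancel₀ hy₁n
  have bNy₁ : y₁ * (r (-1, -1) * y₁⁻¹ + r (-1, 0) + r (-1, 1) * y₁)
      = r (-1, 1) * y₁ ^ 2 + r (-1, 0) * y₁ + r (-1, -1) := by
    linear_combination r (-1, -1) * mul_inv_cancel₀ hy₁n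
  have bPX : x * (r (-1, 1) * x⁻¹ + r (0, 1) + r (1, 1) * x)
      = r (1, 1) * x ^ 2 + r (0, 1) * x + r (-1, 1) := by
    linear_combination r (-1, 1) * mul_inv_cancel₀ hx0
  have bRX : x * (r (-1, -1) * x⁻¹ + r (0, -1) + r (1, -1) * x)
      = r (1, -1) * x ^ 2 + r (0, -1) * x + r (-1, -1) := by
    linear_combination r (-1, -1) * mul_inv_cancel₀ hx0
  -- nonvanishing, polynomial form
  have cAy : r (1, 1) * y ^ 2 + r (1, 0) * y + r (1, -1) ≠ 0 := by
    rw [← bA]; exact mul_ne_zero hy0 hDy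
  have cAy₁ : r (1, 1) * y₁ ^ 2 + r (1, 0) * y₁ + r (1, -1) ≠ 0 := by
    rw [← bDy₁]; exact mul_ne_zero hy₁n hDy₁'
  have cPx₁ : r (1, 1) * x₁ ^ 2 + r (0, 1) * x₁ + r (-1, 1) ≠ 0 := by
    rw [← bDx₁]; exact mul_ne_zero hx₁n hDx₁'
  -- Vieta relations
  have ex₁ : x₁ * (x * (r (1, -1) * y⁻¹ + r (1, 0) + r (1, 1) * y))
      = r (-1, -1) * y⁻¹ + r (-1, 0) + r (-1, 1) * y := by
    rw [hx₁def]; exact div_mul_cancel₀ _ (mul_ne_zero hx0 hDy)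
  have ey₁ : y₁ * (y * (r (-1, 1) * x₁⁻¹ + r (0, 1) + r (1, 1) * x₁))
      = r (-1, -1) * x₁⁻¹ + r (0, -1) + r (1, -1) * x₁ := by
    rw [hy₁def]; exact div_mul_cancel₀ _ (mul_ne_zero hy0 hDx₁')
  have cV1 : x * x₁ * (r (1, 1) * y ^ 2 + r (1, 0) * y + r (1, -1))
      = r (-1, 1) * y ^ 2 + r (-1, 0) * y + r (-1, -1) := by
    linear_combination y * ex₁ - x * x₁ * bA + bC
  have cV2 : y * y₁ * (r (1, 1) * x₁ ^ 2 + r (0, 1) * x₁ + r (-1, 1))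
      = r (1, -1) * x₁ ^ 2 + r (0, -1) * x₁ + r (-1, -1) := by
    linear_combination x₁ * ey₁ - y * y₁ * bDx₁ + bNx₁
  -- cleared curve equation
  have ch1 : x ^ 2 * (r (1, 1) * y ^ 2 + r (1, 0) * y + r (1, -1))
      + x * (r (0, 1) * y ^ 2 + (r (0, 0) - w) * y + r (0, -1))
      + (r (-1, 1) * y ^ 2 + r (-1, 0) * y + r (-1, -1)) = 0 := by
    linear_combination x * y * hxy'
      - (r (1, -1) * x ^ 2 + r (0, -1) * x + r (-1, -1) * (x * x⁻¹)) * mul_inv_cancel₀ hy0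
      - (r (-1, 1) * y ^ 2 + r (-1, 0) * y + r (-1, -1)) * mul_inv_cancel₀ hx0
  have cdet : r (1, 1) * ((r (0, 0) - w) * r (-1, -1) - r (0, -1) * r (-1, 0))
      - r (1, 0) * (r (0, 1) * r (-1, -1) - r (0, -1) * r (-1, 1))
      + r (1, -1) * (r (0, 1) * r (-1, 0) - (r (0, 0) - w) * r (-1, 1)) = 0 := by
    linear_combination hdet
  obtain ⟨hI, hII⟩ := core (r (1, 1)) (r (1, 0)) (r (1, -1)) (r (0, 1)) (r (0, 0) - w)
    (r (0, -1)) (r (-1, 1)) (r (-1, 0)) (r (-1, -1)) x y x₁ y₁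
    hx0 hy0 hx₁n hy₁n cAy cAy₁ cPx₁ ch1 cV1 cV2 cdet
  -- x₂ = x
  have ex₂ : x₂ * (x₁ * (r (1, -1) * y₁⁻¹ + r (1, 0) + r (1, 1) * y₁))
      = r (-1, -1) * y₁⁻¹ + r (-1, 0) + r (-1, 1) * y₁ := by
    rw [hx₂def]; exact div_mul_cancel₀ _ (mul_ne_zero hx₁n hDy₁')
  have h5 : x * (x₁ * (r (1, -1) * y₁⁻¹ + r (1, 0) + r (1, 1) * y₁))
      = r (-1, -1) * y₁⁻¹ + r (-1, 0) + r (-1, 1) * y₁ := by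
    apply mul_left_cancel₀ hy₁n
    linear_combination x * x₁ * bDy₁ - hI - bNy₁
  have hx₂x : x₂ = x :=
    mul_right_cancel₀ (mul_ne_zero hx₁n hDy₁') (ex₂.trans h5.symm)
  have hDx : r (-1, 1) * x⁻¹ + r (0, 1) + r (1, 1) * x ≠ 0 := by
    rw [← hx₂x]; exact hDx₂'
  have h6 : y * (y₁ * (r (-1, 1) * x⁻¹ + r (0, 1) + r (1, 1) * x))
      = r (-1, -1) * x⁻¹ + r (0, -1) + r (1, -1) * x := by
    apply mul_left_cancel₀ hx0
    linear_combination y * y₁ * bPX - hII - bRX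
  -- conclude
  rw [hδxy, hδ, hηq2, hξ]
  simp only [esum]
  show (x₂, (r (-1, -1) * x₂⁻¹ + r (0, -1) + r (1, -1) * x₂) /
      (y₁ * (r (-1, 1) * x₂⁻¹ + r (0, 1) + r (1, 1) * x₂))) = (x, y)
  rw [hx₂x, Prod.mk.injEq]
  exact ⟨rfl, ((div_eq_iff (mul_ne_zero hy₁n hDx)).mpr h6.symm)⟩
end

section
/- Let S be one of the 16 vertically symmetric step sets, so η(x,y) = (1/x, y), and let ξ(x,y) = (x, y_ξ(x,y)) with y_ξ(x,y) = (1/y)·(Σ_{(i,-1)∈S} x^i)/(Σ_{(i,1)∈S} x^i). Then the rational function (x − 1/x)·(y − y_ξ(x,y)) is not identically zero on the curve {(x,y) : K(x,y) = 0}, where K(x,y) = xy(Σ_{(i,j)∈S} x^i y^j − 1/z), for every nonzero z with |z| < 1/|S|. -/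
/-!
Dividing `K(x, y) = 0` by `xy` gives `A y + (B − 1/z) + C y⁻¹ = 0`, a quadratic in `y` whose
coefficients `A`, `B`, `C` collect the steps with `j = 1, 0, −1`. Its two roots multiply to
`C / A`, so `y_ξ(x, y) = C / (A y)` is the other root and `y = y_ξ(x, y)` forces a double root.
For real `x > 1` with `|S| x < 1/|z|` the discriminant cannot vanish, because `|1/z|` then
dominates `|A| + |B| + |C|`; and `x − 1/x ≠ 0` for such `x`.
-/

open Finset Polynomial

theorem sum_eq_sum_snd_eq_one_add_zero_add_neg_one {M : Type*} [AddCommMonoid M]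
    {S : Finset (ℤ × ℤ)} (hS : ∀ q ∈ S, q.2 ∈ ({-1, 0, 1} : Finset ℤ)) (g : ℤ × ℤ → M) :
    ∑ q ∈ S, g q = ∑ q ∈ S.filter (fun q => q.2 = 1), g q
      + ∑ q ∈ S.filter (fun q => q.2 = 0), g q + ∑ q ∈ S.filter (fun q => q.2 = -1), g q := by
  simp only [sum_filter, ← sum_add_distrib]
  refine sum_congr rfl fun q hq => ?_
  have hq2 := hS q hq
  simp only [mem_insert, mem_singleton] at hq2
  rcases hq2 with h | h | h <;> simp [h]

/-- The coefficient of `yʲ` in `∑_{(i,j) ∈ S} xⁱ yʲ`; `A`, `B`, `C` are `j = 1, 0, −1`. -/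
def stepCoeff {K : Type*} [DivisionRing K] (S : Finset (ℤ × ℤ)) (j : ℤ) (x : K) : K :=
  ∑ q ∈ S.filter (fun q => q.2 = j), x ^ q.1

theorem sum_zpow_mul_zpow_eq {K : Type*} [Field K] {S : Finset (ℤ × ℤ)}
    (hS : ∀ q ∈ S, q.2 ∈ ({-1, 0, 1} : Finset ℤ)) (x y : K) :
    ∑ q ∈ S, x ^ q.1 * y ^ q.2 =
      stepCoeff S 1 x * y + stepCoeff S 0 x + stepCoeff S (-1) x * y⁻¹ := by
  rw [sum_eq_sum_snd_eq_one_add_zero_add_neg_one hS, stepCoeff, stepCoeff, stepCoeff, sum_mul,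
    sum_mul]
  refine congrArg₂ (· + ·) (congrArg₂ (· + ·) ?_ ?_) ?_ <;>
    exact sum_congr rfl fun q hq => by simp [(mem_filter.1 hq).2]

theorem norm_sum_zpow_le {𝕜 ι : Type*} [NormedDivisionRing 𝕜] {T : Finset ι} {n : ι → ℤ}
    (hn : ∀ i ∈ T, n i ∈ ({-1, 0, 1} : Finset ℤ)) {x : 𝕜} (hx : 1 ≤ ‖x‖) :
    ‖∑ i ∈ T, x ^ n i‖ ≤ T.card * ‖x‖ := by
  refine (norm_sum_le _ _).trans ?_
  rw [← nsmul_eq_mul]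
  refine sum_le_card_nsmul _ _ _ fun i hi => ?_
  have hni := hn i hi
  simp only [mem_insert, mem_singleton] at hni
  rcases hni with h | h | h <;> simp only [h, zpow_neg_one, zpow_zero, zpow_one, norm_inv, norm_one]
  · exact (inv_le_one_of_one_le₀ hx).trans hx
  · exact hx
  · exact le_rfl

theorem norm_stepCoeff_add_le {𝕜 : Type*} [NormedDivisionRing 𝕜] {S : Finset (ℤ × ℤ)}
    (hS : ∀ q ∈ S, q.1 ∈ ({-1, 0, 1} : Finset ℤ) ∧ q.2 ∈ ({-1, 0, 1} : Finset ℤ))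
    {x : 𝕜} (hx : 1 ≤ ‖x‖) :
    ‖stepCoeff S 1 x‖ + ‖stepCoeff S 0 x‖ + ‖stepCoeff S (-1) x‖ ≤ S.card * ‖x‖ := by
  have hcard := sum_eq_sum_snd_eq_one_add_zero_add_neg_one (fun q hq => (hS q hq).2)
    (fun _ => (1 : ℕ))
  simp only [← card_eq_sum_ones] at hcard
  have hrow (j : ℤ) : ‖stepCoeff S j x‖ ≤ (S.filter (fun q => q.2 = j)).card * ‖x‖ :=
    norm_sum_zpow_le (fun q hq => (hS q (mem_of_mem_filter q hq)).1) hx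
  rw [hcard]
  push_cast
  linarith [hrow 1, hrow 0, hrow (-1)]

theorem stepCoeff_ofReal_ne_zero {S : Finset (ℤ × ℤ)} {i j : ℤ} (hij : (i, j) ∈ S) {x : ℝ}
    (hx : 0 < x) : stepCoeff S j (x : ℂ) ≠ 0 := by
  have hpos : 0 < ∑ q ∈ S.filter (fun q => q.2 = j), x ^ q.1 :=
    sum_pos (fun q _ => zpow_pos hx _) ⟨_, mem_filter.2 ⟨hij, rfl⟩⟩
  rw [stepCoeff]
  exact_mod_cast hpos.ne'

theorem discrim_sub_ne_zero {a b c w : ℂ} (h : ‖a‖ + ‖b‖ + ‖c‖ < ‖w‖) :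
    discrim a (b - w) c ≠ 0 := by
  rw [discrim, sub_ne_zero]
  intro heq
  have hlt : ‖a‖ + ‖c‖ < ‖b - w‖ := by
    have := norm_sub_norm_le w b
    rw [norm_sub_rev] at this
    linarith
  have hsq : ‖b - w‖ ^ 2 = 4 * ‖a‖ * ‖c‖ := by
    rw [← norm_pow, heq]
    simp
  nlinarith [sq_nonneg (‖a‖ - ‖c‖), mul_self_lt_mul_self (by positivity) hlt]

theorem exists_root_ne_other_root {K : Type*} [Field K] [IsAlgClosed K] {a b c : K}
    (ha : a ≠ 0) (hc : c ≠ 0) (hdisc : discrim a b c ≠ 0) :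
    ∃ y : K, y ≠ 0 ∧ a * y + b + c * y⁻¹ = 0 ∧ y - 1 / y * c / a ≠ 0 := by
  obtain ⟨y, hroot⟩ := IsAlgClosed.exists_root (C a * X ^ 2 + C b * X + C c)
    (by rw [degree_quadratic ha]; norm_num)
  have hy : a * y ^ 2 + b * y + c = 0 := by simpa using hroot
  have hy0 : y ≠ 0 := by
    rintro rfl
    exact hc (by simpa using hy)
  refine ⟨y, hy0, ?_, fun h => hdisc ?_⟩
  · field_simp
    linear_combination hy
  · have hprod : a * y ^ 2 = c := by
      field_simp at h
      linear_combination h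
    have hdisc_mul : discrim a b c * c = 0 := by
      rw [discrim]
      linear_combination (a * (b * y - 2 * c)) * (hy - hprod) - b ^ 2 * hprod
    exact (mul_eq_zero.1 hdisc_mul).resolve_right hc

theorem stmt_15_general (S : Finset (ℤ × ℤ))
    (hS : ∀ p ∈ S, p.1 ∈ ({-1, 0, 1} : Finset ℤ) ∧ p.2 ∈ ({-1, 0, 1} : Finset ℤ) ∧ p ≠ (0, 0))
    (hdown : ∃ i, (i, -1) ∈ S) (hup : ∃ i, (i, 1) ∈ S)
    (z : ℂ) (hz : z ≠ 0) (hzs : ‖z‖ < 1 / (S.card : ℝ)) :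
    ∃ x y : ℂ, x ≠ 0 ∧ y ≠ 0 ∧
      (∑ q ∈ S.filter (fun q => q.2 = 1), x ^ q.1) ≠ 0 ∧
      x * y * ((∑ q ∈ S, x ^ q.1 * y ^ q.2) - 1 / z) = 0 ∧
      (x - 1 / x) *
        (y - (1 / y) * (∑ q ∈ S.filter (fun q => q.2 = -1), x ^ q.1) /
          (∑ q ∈ S.filter (fun q => q.2 = 1), x ^ q.1)) ≠ 0 := by
  obtain ⟨i, hi⟩ := hup
  obtain ⟨k, hk⟩ := hdown
  obtain ⟨x, hx1, hxz⟩ : ∃ x : ℝ, 1 < x ∧ S.card * x < ‖1 / z‖ := by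
    have hS0 : (0 : ℝ) < S.card := by exact_mod_cast card_pos.2 ⟨_, hi⟩
    have hcard : (S.card : ℝ) < ‖1 / z‖ := by
      rw [norm_div, norm_one]
      exact (lt_one_div (norm_pos_iff.2 hz) hS0).1 hzs
    obtain ⟨x, hx1, hxz⟩ := exists_between ((one_lt_div hS0).2 hcard)
    exact ⟨x, hx1, by rwa [lt_div_iff₀' hS0] at hxz⟩
  have hnx : ‖(x : ℂ)‖ = x := Complex.norm_of_nonneg (by linarith)
  have hcoeff := (norm_stepCoeff_add_le (fun q hq => ⟨(hS q hq).1, (hS q hq).2.1⟩)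
    (hnx.symm ▸ hx1.le)).trans_lt (hnx.symm ▸ hxz)
  have hup := stepCoeff_ofReal_ne_zero hi (by linarith : 0 < x)
  obtain ⟨y, hy0, hroot, hξ⟩ := exists_root_ne_other_root hup
    (stepCoeff_ofReal_ne_zero hk (by linarith)) (discrim_sub_ne_zero hcoeff)
  have hη : (x : ℂ) - 1 / x ≠ 0 := by
    have : 1 / x < x := (div_lt_one (by linarith)).2 hx1 |>.trans hx1
    exact_mod_cast sub_ne_zero.2 this.ne'
  refine ⟨x, y, by exact_mod_cast (by linarith : x ≠ 0), hy0, hup, ?_, mul_ne_zero hη hξ⟩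
  rw [sum_zpow_mul_zpow_eq (fun q hq => (hS q hq).2.1), ← mul_zero ((x : ℂ) * y), ← hroot]
  ring

/-- For a vertically symmetric small-step set `S` (with an up and a down step), the
rational function `(x − 1/x)·(y − y_ξ(x,y))` is not identically zero on the kernel
curve `{K(x,y) = 0}`, `K(x,y) = xy(Σ_{(i,j)∈S} xⁱyʲ − 1/z)`, for every nonzero `z`
with `|z| < 1/|S|`. -/
theorem stmt_15 (S : Finset (ℤ × ℤ))
    (hS : ∀ p ∈ S, p.1 ∈ ({-1, 0, 1} : Finset ℤ) ∧ p.2 ∈ ({-1, 0, 1} : Finset ℤ) ∧ p ≠ (0, 0))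
    (hsym : ∀ i j : ℤ, (i, j) ∈ S ↔ (-i, j) ∈ S)
    (hdown : ∃ i, (i, -1) ∈ S) (hup : ∃ i, (i, 1) ∈ S)
    (z : ℂ) (hz : z ≠ 0) (hzs : ‖z‖ < 1 / (S.card : ℝ)) :
    ∃ x y : ℂ, x ≠ 0 ∧ y ≠ 0 ∧
      (∑ q ∈ S.filter (fun q => q.2 = 1), x ^ q.1) ≠ 0 ∧
      x * y * ((∑ q ∈ S, x ^ q.1 * y ^ q.2) - 1 / z) = 0 ∧
      (x - 1 / x) *
        (y - (1 / y) * (∑ q ∈ S.filter (fun q => q.2 = -1), x ^ q.1) /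
          (∑ q ∈ S.filter (fun q => q.2 = 1), x ^ q.1)) ≠ 0 :=
  stmt_15_general S hS hdown hup z hz hzs
end
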